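/- Let G be a group acting on a set, and let Γ ≤ G with [G : Γ] finite. Suppose the G-orbit of an element l decomposes into finitely many Γ-orbits with representatives l_1, …, l_r. Then [G : Γ] = Σ_{i=1}^r [G_{l_i} : Γ_{l_i}], where G_{l_i} and Γ_{l_i} denote the stabilizers of l_i in G and Γ respectively. -/

import Mathlib

/-!
Send the coset `gΓ` to the `Γ`-orbit of `g⁻¹ • l`. The fibres of this map partition `G ⧸ Γ`, one
for each `lᵢ`. The fibre over `Γ • x` is a translate of the orbit of the trivial coset under the
stabilizer `G_x`, and that orbit is `G_x ⧸ Γ_x`.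
-/

open MulAction

theorem Nat.card_eq_sum_card_preimage_of_range_subset {α β ι : Type*} [Fintype ι] [Finite α]
    (f : α → β) {e : ι → β} (he : Function.Injective e) (hf : Set.range f ⊆ Set.range e) :
    Nat.card α = ∑ i, Nat.card (f ⁻¹' {e i}) := by
  choose k hk using fun a => hf (Set.mem_range_self a)
  have hfiber (i : ι) : {a // k a = i} ≃ f ⁻¹' {e i} :=
    Equiv.subtypeEquivRight fun a => by
      rw [Set.mem_preimage, Set.mem_singleton_iff, ← hk, he.eq_iff]
  rw [← Nat.card_congr (Equiv.sigmaFiberEquiv k), Nat.card_sigma]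
  exact Finset.sum_congr rfl fun i _ => Nat.card_congr (hfiber i)

theorem Subgroup.card_orbit_coe_one_eq_relIndex {G : Type*} [Group G] (Γ S : Subgroup G) :
    Nat.card (orbit S ((1 : G) : G ⧸ Γ)) = Γ.relIndex S := by
  have hstab : stabilizer S ((1 : G) : G ⧸ Γ) = Γ.subgroupOf S := by
    ext s
    rw [mem_stabilizer_iff, Subgroup.mem_subgroupOf]
    change (s : G) • ((1 : G) : G ⧸ Γ) = _ ↔ _
    rw [← mem_stabilizer_iff, stabilizer_quotient]
  rw [Nat.card_congr (orbitEquivQuotientStabilizer S _), hstab]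
  rfl

namespace MulAction

variable {G X : Type*} [Group G] [MulAction G X] (Γ : Subgroup G)

def cosetToOrbit (x : X) : G ⧸ Γ → orbitRel.Quotient Γ X :=
  Quotient.lift (fun g => Quotient.mk'' (g⁻¹ • x)) fun g g' hgg' => by
    refine Quotient.sound' ⟨⟨g⁻¹ * g', QuotientGroup.leftRel_apply.mp hgg'⟩, ?_⟩
    simp [Subgroup.smul_def, mul_smul]

theorem cosetToOrbit_mk (x : X) (g : G) :
    cosetToOrbit Γ x g = Quotient.mk'' (g⁻¹ • x) := rfl

theorem cosetToOrbit_smul_smul (x : X) (h : G) (q : G ⧸ Γ) :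
    cosetToOrbit Γ (h • x) (h • q) = cosetToOrbit Γ x q := by
  induction q using QuotientGroup.induction_on with
  | H g => rw [Quotient.smul_coe, cosetToOrbit_mk, cosetToOrbit_mk, smul_eq_mul, mul_inv_rev,
      mul_smul, inv_smul_smul]

theorem cosetToOrbit_preimage_self (x : X) :
    cosetToOrbit Γ x ⁻¹' {Quotient.mk'' x} = orbit (stabilizer G x) ((1 : G) : G ⧸ Γ) := by
  ext q
  induction q using QuotientGroup.induction_on with
  | H g =>
    rw [Set.mem_preimage, Set.mem_singleton_iff, cosetToOrbit_mk, Quotient.eq'', orbitRel_apply]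
    constructor
    · rintro ⟨γ, hγ⟩
      change (γ : G) • x = g⁻¹ • x at hγ
      refine ⟨⟨g * γ, ?_⟩, ?_⟩
      · rw [mem_stabilizer_iff, mul_smul, hγ, smul_inv_smul]
      · change ((g * γ * 1 : G) : G ⧸ Γ) = g
        rw [mul_one, QuotientGroup.eq, mul_inv_rev, inv_mul_cancel_right]
        exact Γ.inv_mem γ.2
    · rintro ⟨s, hs⟩
      change ((s * 1 : G) : G ⧸ Γ) = g at hs
      rw [mul_one, QuotientGroup.eq] at hs
      refine ⟨⟨g⁻¹ * s, by simpa using Γ.inv_mem hs⟩, ?_⟩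
      change (g⁻¹ * s : G) • x = _
      rw [mul_smul, s.2]

theorem card_cosetToOrbit_preimage (x y : X) (hy : y ∈ orbit G x) :
    Nat.card (cosetToOrbit Γ x ⁻¹' {Quotient.mk'' y}) = Γ.relIndex (stabilizer G y) := by
  obtain ⟨h, rfl⟩ := hy
  have htranslate : cosetToOrbit Γ x ⁻¹' {Quotient.mk'' (h • x)} ≃
      cosetToOrbit Γ (h • x) ⁻¹' {Quotient.mk'' (h • x)} :=
    (toPerm h).subtypeEquiv fun q => by simp [cosetToOrbit_smul_smul]
  rw [Nat.card_congr htranslate, cosetToOrbit_preimage_self,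
    Subgroup.card_orbit_coe_one_eq_relIndex]

end MulAction

theorem index_eq_sum_of_stabilizer_relindex {G : Type*} [Group G] {X : Type*} [MulAction G X]
    (Γ : Subgroup G) (hΓ : Γ.index ≠ 0) (l : X) (r : ℕ) (li : Fin r → X)
    (hmem : ∀ i, li i ∈ MulAction.orbit G l)
    (hcover : ∀ x ∈ MulAction.orbit G l, ∃ i, x ∈ MulAction.orbit Γ (li i))
    (hdisj : ∀ i j, i ≠ j → Disjoint (MulAction.orbit Γ (li i)) (MulAction.orbit Γ (li j))) :
    Γ.index = ∑ i, Γ.relIndex (MulAction.stabilizer G (li i)) := by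
  have : Finite (G ⧸ Γ) := Subgroup.index_ne_zero_iff_finite.mp hΓ
  have hinj : Function.Injective fun i => (Quotient.mk'' (li i) : orbitRel.Quotient Γ X) := by
    intro i j hij
    by_contra hne
    exact Set.disjoint_left.mp (hdisj i j hne) (mem_orbit_self _)
      (orbitRel_apply.mp (Quotient.exact' hij))
  have hrange : Set.range (cosetToOrbit Γ l) ⊆ Set.range fun i => Quotient.mk'' (li i) := by
    rintro _ ⟨q, rfl⟩
    induction q using QuotientGroup.induction_on with
    | H g =>
      obtain ⟨i, hi⟩ := hcover (g⁻¹ • l) (mem_orbit l g⁻¹)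
      exact ⟨i, (Quotient.sound' hi).symm⟩
  calc Γ.index = Nat.card (G ⧸ Γ) := rfl
    _ = ∑ i, Nat.card (cosetToOrbit Γ l ⁻¹' {Quotient.mk'' (li i)}) :=
      Nat.card_eq_sum_card_preimage_of_range_subset _ hinj hrange
    _ = ∑ i, Γ.relIndex (stabilizer G (li i)) :=
      Finset.sum_congr rfl fun i _ => card_cosetToOrbit_preimage Γ l (li i) (hmem i)
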